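/- arXiv:0910.5431 — 3 statements merged into one kernel-verified Lean document; each statement's English description precedes it below -/
import Mathlib

section
/- Let {X(n), n ≥ 1} be a strictly stationary ergodic real-valued sequence with E[X(1)] < 0 and E[|X(1)|] < ∞. For x ≥ 0 define W_x(0) := x and W_x(n+1) := max(W_x(n) + X(n+1), 0) (Lindley's recursion). Then for any two initial conditions x, y ≥ 0, almost surely there exists a finite N such that W_x(n) = W_y(n) for all n ≥ N; that is, solutions of Lindley's recursion started from different initial conditions couple in almost surely finite time. -/
/-!
Unrolling the recursion gives `W_x(n) = max (W_0(n), x + S_n)` with `S_n = X(1) + ⋯ + X(n)`, so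
`W_x(n) = W_0(n)` as soon as `S_n ≤ -x`; it suffices that `S_n → -∞` almost surely.
On the path space, `S_n` is the Birkhoff sum of the first coordinate under the shift. After
subtracting half the mean, the centred sums `S'_n` still have negative mean, and the event
`sup_n S'_n < ∞` is shift-invariant. If it were null, the maximal function `max_{n ≤ K} S'_n`
would be eventually positive almost everywhere, and Garsia's maximal ergodic theorem would force
`E[X(1)] / 2 ≥ 0`. Hence `S_n ≤ sup S' + n E[X(1)] / 2 → -∞`.
-/

open MeasureTheory Filter Set Finset

section BirkhoffMax

variable {α : Type*} {T : α → α} {h : α → ℝ}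

/-- `birkhoffMax T h K u = max_{0 ≤ n ≤ K} birkhoffSum T h n u`, written in Garsia's recursive
form. -/
noncomputable def birkhoffMax (T : α → α) (h : α → ℝ) : ℕ → α → ℝ
  | 0 => 0
  | K + 1 => fun u => max (h u + birkhoffMax T h K (T u)) 0

lemma birkhoffMax_nonneg : ∀ K u, 0 ≤ birkhoffMax T h K u
  | 0, _ => le_rfl
  | _ + 1, _ => le_max_right _ _

lemma birkhoffMax_le_succ : ∀ K u, birkhoffMax T h K u ≤ birkhoffMax T h (K + 1) u
  | 0, u => birkhoffMax_nonneg 1 u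
  | K + 1, u => max_le_max_right 0 (add_le_add_right (birkhoffMax_le_succ K (T u)) (h u))

lemma monotone_birkhoffMax (u : α) : Monotone (birkhoffMax T h · u) :=
  monotone_nat_of_le_succ fun K => birkhoffMax_le_succ K u

lemma birkhoffSum_le_birkhoffMax : ∀ n u, birkhoffSum T h n u ≤ birkhoffMax T h n u
  | 0, u => by simp [birkhoffMax]
  | n + 1, u => by
    rw [birkhoffSum_succ']
    exact le_max_of_le_left (add_le_add_right (birkhoffSum_le_birkhoffMax n (T u)) (h u))

lemma birkhoffMax_sub_birkhoffMax_comp_le_indicator (K : ℕ) (u : α) :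
    birkhoffMax T h K u - birkhoffMax T h K (T u) ≤
      {u | 0 < birkhoffMax T h K u}.indicator h u := by
  by_cases hu : 0 < birkhoffMax T h K u
  · rw [indicator_of_mem (s := {u | 0 < birkhoffMax T h K u}) hu]
    cases K with
    | zero => exact absurd hu (lt_irrefl 0)
    | succ K =>
      have hpos : 0 < h u + birkhoffMax T h K (T u) := by simpa [birkhoffMax] using hu
      have hrec : birkhoffMax T h (K + 1) u = h u + birkhoffMax T h K (T u) :=
        max_eq_left hpos.le
      linarith [birkhoffMax_le_succ (T := T) (h := h) K (T u)]
  · rw [indicator_of_notMem (s := {u | 0 < birkhoffMax T h K u}) hu]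
    linarith [not_lt.mp hu, birkhoffMax_nonneg (T := T) (h := h) K (T u)]

lemma bddAbove_range_birkhoffSum_comp_iff (u : α) :
    BddAbove (range fun n => birkhoffSum T h n (T u)) ↔
      BddAbove (range fun n => birkhoffSum T h n u) := by
  constructor
  · rintro ⟨B, hB⟩
    refine ⟨max 0 (h u + B), forall_mem_range.2 fun n => ?_⟩
    cases n with
    | zero => simp
    | succ n =>
      rw [birkhoffSum_succ']
      exact le_max_of_le_right (add_le_add_right (hB (mem_range_self n)) _)
  · rintro ⟨B, hB⟩
    refine ⟨B - h u, forall_mem_range.2 fun n => ?_⟩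
    have := hB (mem_range_self (n + 1))
    rw [birkhoffSum_succ'] at this
    linarith

end BirkhoffMax

section MaximalErgodic

variable {α : Type*} [MeasurableSpace α] {ν : Measure α} {T : α → α} {h : α → ℝ}

lemma measurable_birkhoffMax (hT : Measurable T) (hh : Measurable h) :
    ∀ K, Measurable (birkhoffMax T h K)
  | 0 => measurable_const
  | K + 1 => (hh.add ((measurable_birkhoffMax hT hh K).comp hT)).max measurable_const

lemma integrable_birkhoffMax (hT : MeasurePreserving T ν ν) (hh : Integrable h ν) :
    ∀ K, Integrable (birkhoffMax T h K) ν
  | 0 => integrable_zero α ℝ ν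
  | K + 1 =>
    have hK := integrable_birkhoffMax hT hh K
    (hh.add ((hT.integrable_comp hK.aestronglyMeasurable).mpr hK)).pos_part

/-- Garsia's maximal ergodic theorem. -/
theorem setIntegral_birkhoffMax_pos_nonneg (hT : MeasurePreserving T ν ν) (hhm : Measurable h)
    (hh : Integrable h ν) (K : ℕ) :
    0 ≤ ∫ u in {u | 0 < birkhoffMax T h K u}, h u ∂ν := by
  set M := birkhoffMax T h K
  have hMm : Measurable M := measurable_birkhoffMax hT.measurable hhm K
  have hM : Integrable M ν := integrable_birkhoffMax hT hh K
  have hMT : Integrable (fun u => M (T u)) ν := (hT.integrable_comp hMm.aestronglyMeasurable).mpr hM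
  have hA : MeasurableSet {u | 0 < M u} := measurableSet_lt measurable_const hMm
  have hinv : ∫ u, M (T u) ∂ν = ∫ u, M u ∂ν := by
    rw [← integral_map hT.measurable.aemeasurable hMm.aestronglyMeasurable, hT.map_eq]
  calc (0 : ℝ) = ∫ u, (M u - M (T u)) ∂ν := by rw [integral_sub hM hMT, hinv, sub_self]
    _ ≤ ∫ u, {u | 0 < M u}.indicator h u ∂ν :=
      integral_mono (hM.sub hMT) (hh.indicator hA)
        (birkhoffMax_sub_birkhoffMax_comp_le_indicator K)
    _ = ∫ u in {u | 0 < M u}, h u ∂ν := integral_indicator hA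

theorem setIntegral_iUnion_birkhoffMax_pos_nonneg (hT : MeasurePreserving T ν ν)
    (hhm : Measurable h) (hh : Integrable h ν) :
    0 ≤ ∫ u in ⋃ K, {u | 0 < birkhoffMax T h K u}, h u ∂ν :=
  ge_of_tendsto
    (tendsto_setIntegral_of_monotone
      (fun K => measurableSet_lt measurable_const (measurable_birkhoffMax hT.measurable hhm K))
      (fun _ _ hKL _ hu => hu.trans_le (monotone_birkhoffMax _ hKL)) hh.integrableOn)
    (Eventually.of_forall (setIntegral_birkhoffMax_pos_nonneg hT hhm hh))

end MaximalErgodic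

section Drift

variable {α : Type*} [MeasurableSpace α] {ν : Measure α} {T : α → α}

lemma Measurable.birkhoffSum {h : α → ℝ} (hT : Measurable T) (hh : Measurable h) (n : ℕ) :
    Measurable (birkhoffSum T h n) :=
  Finset.measurable_sum _ fun k _ => hh.comp (hT.iterate k)

theorem Ergodic.ae_bddAbove_birkhoffSum {h : α → ℝ} (herg : Ergodic T ν) (hhm : Measurable h)
    (hh : Integrable h ν) (hneg : ∫ u, h u ∂ν < 0) :
    ∀ᵐ u ∂ν, BddAbove (range fun n => birkhoffSum T h n u) := by
  have hinv : T ⁻¹' {u | BddAbove (range fun n => birkhoffSum T h n u)} =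
      {u | BddAbove (range fun n => birkhoffSum T h n u)} :=
    Set.ext bddAbove_range_birkhoffSum_comp_iff
  refine (herg.ae_mem_or_ae_notMem
    (measurableSet_bddAbove_range (herg.measurable.birkhoffSum hhm)) hinv).resolve_right
    fun hunbdd => ?_
  have hfull : ∀ᵐ u ∂ν, u ∈ ⋃ K, {u | 0 < birkhoffMax T h K u} := by
    filter_upwards [hunbdd] with u hu
    obtain ⟨_, ⟨n, rfl⟩, hn⟩ := not_bddAbove_iff.1 hu 0
    exact mem_iUnion.2 ⟨n, hn.trans_le (birkhoffSum_le_birkhoffMax n u)⟩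
  have hnonneg := setIntegral_iUnion_birkhoffMax_pos_nonneg herg.toMeasurePreserving hhm hh
  rw [Measure.restrict_eq_self_of_ae_mem hfull] at hnonneg
  linarith

theorem Ergodic.ae_tendsto_birkhoffSum_atBot [IsProbabilityMeasure ν] {f : α → ℝ}
    (herg : Ergodic T ν) (hfm : Measurable f) (hf : Integrable f ν) (hneg : ∫ u, f u ∂ν < 0) :
    ∀ᵐ u ∂ν, Tendsto (fun n => birkhoffSum T f n u) atTop atBot := by
  set c := (∫ u, f u ∂ν) / 2 with hc_def
  have hc : c < 0 := by linarith
  have hcenter : ∫ u, (f u - c) ∂ν < 0 := by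
    rw [integral_sub hf (integrable_const c), integral_const, probReal_univ, one_smul]
    linarith
  filter_upwards [herg.ae_bddAbove_birkhoffSum (h := fun u => f u - c) (hfm.sub measurable_const)
    (hf.sub (integrable_const c)) hcenter] with u ⟨B, hB⟩
  have hsplit : ∀ n, birkhoffSum T f n u = birkhoffSum T (fun u => f u - c) n u + n * c := by
    intro n
    simp [birkhoffSum, Finset.sum_sub_distrib]
  refine tendsto_atBot_mono (fun n => ?_)
    (tendsto_atBot_add_const_left _ B (tendsto_natCast_atTop_atTop.atTop_mul_const_of_neg hc))
  rw [hsplit]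
  exact add_le_add_left (hB (mem_range_self n)) _

end Drift

lemma birkhoffSum_shift_apply_zero {M : Type*} [AddCommMonoid M] (n : ℕ) (u : ℕ → M) :
    birkhoffSum (fun (v : ℕ → M) k => v (k + 1)) (fun v => v 0) n u = ∑ j ∈ range n, u j := by
  have hiter : ∀ j (v : ℕ → M) k, (fun (v : ℕ → M) k => v (k + 1))^[j] v k = v (k + j) := by
    intro j
    induction j with
    | zero => simp
    | succ j ih => intro v k; rw [Function.iterate_succ_apply, ih, add_assoc]
  simp only [birkhoffSum, hiter, zero_add]

section Lindley

variable {ξ : ℕ → ℝ}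

def lindley (ξ : ℕ → ℝ) (z : ℝ) : ℕ → ℝ
  | 0 => z
  | n + 1 => max (lindley ξ z n + ξ n) 0

lemma eq_lindley {w : ℕ → ℝ} (hrec : ∀ n, w (n + 1) = max (w n + ξ n) 0) :
    w = lindley ξ (w 0) := by
  funext n
  induction n with
  | zero => rfl
  | succ n ih => rw [hrec, ih, lindley]

lemma lindley_nonneg {z : ℝ} (hz : 0 ≤ z) : ∀ n, 0 ≤ lindley ξ z n
  | 0 => hz
  | _ + 1 => le_max_right _ _

lemma lindley_eq_max {z : ℝ} (hz : 0 ≤ z) (n : ℕ) :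
    lindley ξ z n = max (lindley ξ 0 n) (z + ∑ j ∈ range n, ξ j) := by
  induction n with
  | zero => simp [lindley, hz]
  | succ n ih =>
    simp only [lindley]
    rw [ih, Finset.sum_range_succ, ← max_add_add_right, sup_right_comm, add_assoc]

lemma eventually_lindley_eq_lindley_zero
    (hξ : Tendsto (fun n => ∑ j ∈ range n, ξ j) atTop atBot) {z : ℝ} (hz : 0 ≤ z) :
    ∀ᶠ n in atTop, lindley ξ z n = lindley ξ 0 n := by
  filter_upwards [hξ.eventually_le_atBot (-z)] with n hn
  rw [lindley_eq_max hz, max_eq_left ((by linarith : z + _ ≤ 0).trans (lindley_nonneg le_rfl n))]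

end Lindley

theorem lindley_coupling_general
    {Ω : Type*} [MeasurableSpace Ω] (μ : Measure Ω) [IsProbabilityMeasure μ]
    (X : ℕ → Ω → ℝ) (hmeas : ∀ n, Measurable (X n))
    -- ergodicity of the shift map with respect to the law of the sequence
    (herg : Ergodic (fun x : ℕ → ℝ => fun n => x (n + 1))
      (Measure.map (fun ω => fun n => X n ω) μ))
    (hint : Integrable (X 0) μ)
    (hneg : ∫ ω, X 0 ω ∂μ < 0)
    -- Lindley's recursion started from initial condition `x`
    (W : ℝ → ℕ → Ω → ℝ)
    (hW0 : ∀ x ω, W x 0 ω = x)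
    (hWrec : ∀ x n ω, W x (n + 1) ω = max (W x n ω + X n ω) 0) :
    ∀ x y : ℝ, 0 ≤ x → 0 ≤ y →
      ∀ᵐ ω ∂μ, ∃ N : ℕ, ∀ n ≥ N, W x n ω = W y n ω := by
  intro x y hx hy
  have hg : Measurable fun ω n => X n ω := measurable_pi_lambda _ hmeas
  have : IsProbabilityMeasure (μ.map fun ω n => X n ω) :=
    Measure.isProbabilityMeasure_map hg.aemeasurable
  have h0 : Measurable fun u : ℕ → ℝ => u 0 := measurable_pi_apply 0
  have hdrift := herg.ae_tendsto_birkhoffSum_atBot h0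
    ((integrable_map_measure h0.aestronglyMeasurable hg.aemeasurable).2 hint)
    (by rwa [integral_map hg.aemeasurable h0.aestronglyMeasurable])
  filter_upwards [ae_of_ae_map hg.aemeasurable hdrift] with ω hω
  simp only [birkhoffSum_shift_apply_zero] at hω
  have hW : ∀ z n, W z n ω = lindley (X · ω) z n := fun z =>
    congrFun (by simpa only [hW0] using eq_lindley (w := (W z · ω)) (hWrec z · ω))
  refine eventually_atTop.1 ?_
  filter_upwards [eventually_lindley_eq_lindley_zero hω hx,
    eventually_lindley_eq_lindley_zero hω hy] with n hxn hyn
  rw [hW, hW, hxn, hyn]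

/-- **Coupling of solutions to Lindley's recursion.**
If `{X n}` is a strictly stationary, ergodic real-valued sequence with
`E[|X 0|] < ∞` and `E[X 0] < 0`, and for `x ≥ 0` the process `W x` satisfies
Lindley's recursion `W x 0 = x`, `W x (n+1) = max (W x n + X n, 0)`
(here `X n` is the `(n+1)`-st increment, 0-based indexing), then for any two
initial conditions `x, y ≥ 0`, almost surely the two solutions couple in
finite time: there is a finite `N` with `W x n = W y n` for all `n ≥ N`. -/
theorem lindley_coupling
    {Ω : Type*} [MeasurableSpace Ω] (μ : Measure Ω) [IsProbabilityMeasure μ]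
    (X : ℕ → Ω → ℝ) (hmeas : ∀ n, Measurable (X n))
    -- strict stationarity: every shift of the sequence has the same law
    (hstat : ∀ k : ℕ,
      Measure.map (fun ω => fun n => X (n + k) ω) μ
        = Measure.map (fun ω => fun n => X n ω) μ)
    -- ergodicity of the shift map with respect to the law of the sequence
    (herg : Ergodic (fun x : ℕ → ℝ => fun n => x (n + 1))
      (Measure.map (fun ω => fun n => X n ω) μ))
    (hint : Integrable (X 0) μ)
    (hneg : ∫ ω, X 0 ω ∂μ < 0)
    -- Lindley's recursion started from initial condition `x`
    (W : ℝ → ℕ → Ω → ℝ)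
    (hW0 : ∀ x ω, W x 0 ω = x)
    (hWrec : ∀ x n ω, W x (n + 1) ω = max (W x n ω + X n ω) 0) :
    ∀ x y : ℝ, 0 ≤ x → 0 ≤ y →
      ∀ᵐ ω ∂μ, ∃ N : ℕ, ∀ n ≥ N, W x n ω = W y n ω :=
  lindley_coupling_general μ X hmeas herg hint hneg W hW0 hWrec
end

section
/- Let {X(n), n ≥ 0} be a Markov chain on a finite state space {1, ..., M} with irreducible transition matrix Π = (π_{i,j}), taking real values f(1), ..., f(M), and let S(n) := f(X(1)) + ... + f(X(n)). Then for every θ ∈ ℝ, the scaled cumulant generating function satisfies λ(θ) := lim_{n→∞} (1/n) log E[exp(θ S(n))] = log ρ(Π D_θ), where D_θ is the diagonal matrix with diagonal entries exp(θ f(1)), ..., exp(θ f(M)) and ρ denotes the spectral radius. -/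
open MeasureTheory Filter ProbabilityTheory ENNReal

/-- The spectral radius of a real square matrix: the maximum modulus of its
(complex) eigenvalues. -/
noncomputable def specRad {M : ℕ} (A : Matrix (Fin M) (Fin M) ℝ) : ℝ :=
  (spectralRadius ℂ (A.map (fun x => (x : ℂ)))).toReal

/-- The diagonal matrix `D_θ` with entries `exp (θ f i)`. -/
noncomputable def Dmat {M : ℕ} (f : Fin M → ℝ) (θ : ℝ) :
    Matrix (Fin M) (Fin M) ℝ :=
  Matrix.diagonal fun i => Real.exp (θ * f i)

/-!
Summing over the paths of the chain, `E[exp (θ S n)] = ν ⬝ᵥ Aⁿ 1` with `A = Π D_θ` and `ν` the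
law of `X 0`. For the nonnegative matrix `A`, the `ℓ∞` operator norm `‖Aⁿ‖` is the largest row sum
of `Aⁿ`; irreducibility lets any row with `ν i > 0` dominate every other row up to a constant
independent of `n`, so `ν ⬝ᵥ Aⁿ 1` and `‖Aⁿ‖` agree up to bounded factors. Gelfand's formula
`‖Aⁿ‖ ^ (1/n) → ρ(A)` then gives the limit, and the row sums of `A` are bounded below by
`min exp (θ f j) > 0`, which keeps `ρ(A)` away from `0`.
-/

open Finset Matrix
open scoped Topology

attribute [local instance] Matrix.linftyOpNormedAddCommGroup Matrix.linftyOpNormedRing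
  Matrix.linftyOpNormedAlgebra

namespace Matrix

section Nonneg

variable {ι κ : Type*} [Fintype ι]

lemma mulVec_mono_of_nonneg {A : Matrix κ ι ℝ} (hA : ∀ i j, 0 ≤ A i j) {v w : ι → ℝ}
    (h : v ≤ w) : A *ᵥ v ≤ A *ᵥ w :=
  fun i => sum_le_sum fun j _ => mul_le_mul_of_nonneg_left (h j) (hA i j)

lemma mulVec_nonneg {A : Matrix κ ι ℝ} (hA : ∀ i j, 0 ≤ A i j) {v : ι → ℝ} (hv : 0 ≤ v) :
    0 ≤ A *ᵥ v :=
  fun i => sum_nonneg fun j _ => mul_nonneg (hA i j) (hv j)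

lemma apply_mul_le_mulVec_apply {A : Matrix κ ι ℝ} (hA : ∀ i j, 0 ≤ A i j) {v : ι → ℝ}
    (hv : 0 ≤ v) (i : κ) (k : ι) : A i k * v k ≤ (A *ᵥ v) i :=
  single_le_sum (f := fun j => A i j * v j) (fun j _ => mul_nonneg (hA i j) (hv j)) (mem_univ k)

lemma mulVec_one_apply_le_linfty_opNorm [Fintype κ] (A : Matrix κ ι ℝ) (i : κ) :
    (A *ᵥ 1) i ≤ ‖A‖ := by
  calc (A *ᵥ 1) i ≤ ∑ j, ‖A i j‖ := by
        simp only [mulVec, dotProduct, Pi.one_apply, mul_one]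
        exact sum_le_sum fun j _ => le_abs_self _
    _ ≤ ‖A‖ := by
        have := NNReal.coe_le_coe.2 (le_sup (f := fun i => ∑ j, ‖A i j‖₊) (mem_univ i))
        push_cast at this
        rwa [linfty_opNorm_def]

lemma linfty_opNorm_le_of_mulVec_one_le [Fintype κ] {A : Matrix κ ι ℝ}
    (hA : ∀ i j, 0 ≤ A i j) {C : ℝ} (hC : 0 ≤ C) (h : ∀ i, (A *ᵥ 1) i ≤ C) : ‖A‖ ≤ C := by
  rw [linfty_opNorm_def, ← NNReal.coe_mk C hC, NNReal.coe_le_coe]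
  refine Finset.sup_le fun i _ => ?_
  rw [← NNReal.coe_le_coe]
  push_cast
  simpa [mulVec, dotProduct, abs_of_nonneg (hA i _)] using h i

lemma linfty_opNorm_map_ofReal [Fintype κ] (A : Matrix κ ι ℝ) : ‖A.map ((↑) : ℝ → ℂ)‖ = ‖A‖ := by
  simp [linfty_opNorm_def]

end Nonneg

section Powers

variable {ι : Type*} [Fintype ι] [DecidableEq ι] {A : Matrix ι ι ℝ}

lemma smul_one_le_pow_mulVec_one (hA : ∀ i j, 0 ≤ A i j) {c : ℝ} (hc : 0 ≤ c)
    (hrow : c • 1 ≤ A *ᵥ 1) (n : ℕ) : c ^ n • 1 ≤ A ^ n *ᵥ 1 := by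
  induction n with
  | zero => simp
  | succ n ih =>
    calc c ^ (n + 1) • (1 : ι → ℝ) = c • c ^ n • 1 := by rw [pow_succ', mul_smul]
      _ ≤ c • (A ^ n *ᵥ 1) := smul_le_smul_of_nonneg_left ih hc
      _ = A ^ n *ᵥ (c • 1) := (mulVec_smul _ _ _).symm
      _ ≤ A ^ n *ᵥ (A *ᵥ 1) := mulVec_mono_of_nonneg (pow_apply_nonneg hA n) hrow
      _ = A ^ (n + 1) *ᵥ 1 := by rw [mulVec_mulVec, pow_succ]

lemma pow_apply_mul_pow_mulVec_one_le (hA : ∀ i j, 0 ≤ A i j) {m n : ℕ} (hmn : m ≤ n)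
    (i k : ι) : (A ^ m) i k * (A ^ n *ᵥ 1) k ≤ ‖A ^ m‖ * (A ^ n *ᵥ 1) i := by
  have hhead : (A ^ m) i k * (A ^ (n - m) *ᵥ 1) k ≤ (A ^ n *ᵥ 1) i := by
    rw [← Nat.add_sub_cancel' hmn, pow_add, ← mulVec_mulVec, Nat.add_sub_cancel_left]
    exact apply_mul_le_mulVec_apply (pow_apply_nonneg hA m)
      (mulVec_nonneg (pow_apply_nonneg hA _) zero_le_one) i k
  have htail : A ^ n *ᵥ 1 ≤ ‖A ^ m‖ • (A ^ (n - m) *ᵥ 1) := by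
    rw [← Nat.sub_add_cancel hmn, pow_add, ← mulVec_mulVec, Nat.add_sub_cancel, ← mulVec_smul]
    exact mulVec_mono_of_nonneg (pow_apply_nonneg hA _) fun j => by
      simpa using mulVec_one_apply_le_linfty_opNorm (A ^ m) j
  calc (A ^ m) i k * (A ^ n *ᵥ 1) k
      ≤ (A ^ m) i k * (‖A ^ m‖ * (A ^ (n - m) *ᵥ 1) k) :=
        mul_le_mul_of_nonneg_left (htail k) (pow_apply_nonneg hA m i k)
    _ = ‖A ^ m‖ * ((A ^ m) i k * (A ^ (n - m) *ᵥ 1) k) := by ring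
    _ ≤ ‖A ^ m‖ * (A ^ n *ᵥ 1) i := mul_le_mul_of_nonneg_left hhead (norm_nonneg _)

lemma exists_norm_pow_le_mul_pow_mulVec_one (hA : ∀ i j, 0 ≤ A i j) {i : ι}
    (hirr : ∀ j, ∃ m, 0 < (A ^ m) i j) :
    ∃ C > 0, ∀ᶠ n in atTop, ‖A ^ n‖ ≤ C * (A ^ n *ᵥ 1) i := by
  choose m hm using hirr
  have hentry : ∀ k, (A ^ m k) i k ≤ ‖A ^ m k‖ := fun k => by
    simpa using (apply_mul_le_mulVec_apply (pow_apply_nonneg hA (m k)) zero_le_one i k).trans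
      (mulVec_one_apply_le_linfty_opNorm _ i)
  have hterm : ∀ k, 0 < ‖A ^ m k‖ / (A ^ m k) i k := fun k =>
    div_pos ((hm k).trans_le (hentry k)) (hm k)
  set C := ∑ k, ‖A ^ m k‖ / (A ^ m k) i k
  have hC : 0 < C := sum_pos (fun k _ => hterm k) ⟨i, mem_univ i⟩
  refine ⟨C, hC, ?_⟩
  filter_upwards [eventually_ge_atTop (univ.sup m)] with n hn
  have hrow : 0 ≤ A ^ n *ᵥ 1 := mulVec_nonneg (pow_apply_nonneg hA n) zero_le_one
  refine linfty_opNorm_le_of_mulVec_one_le (pow_apply_nonneg hA n) (mul_nonneg hC.le (hrow i))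
    fun k => ?_
  calc (A ^ n *ᵥ 1) k ≤ ‖A ^ m k‖ / (A ^ m k) i k * (A ^ n *ᵥ 1) i := by
        rw [div_mul_eq_mul_div, le_div_iff₀ (hm k), mul_comm]
        exact pow_apply_mul_pow_mulVec_one_le hA ((le_sup (mem_univ k)).trans hn) i k
    _ ≤ C * (A ^ n *ᵥ 1) i :=
        mul_le_mul_of_nonneg_right (single_le_sum (fun k _ => (hterm k).le) (mem_univ k)) (hrow i)

lemma sum_paths_mul_prod_eq_dotProduct (A : Matrix ι ι ℝ) (n : ℕ) (ν : ι → ℝ) :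
    ∑ p : Fin (n + 1) → ι, ν (p 0) * ∏ k : Fin n, A (p k.castSucc) (p k.succ) =
      ν ⬝ᵥ (A ^ n *ᵥ 1) := by
  induction n generalizing ν with
  | zero =>
    rw [← (Equiv.funUnique (Fin 1) ι).symm.sum_comp]
    simp [dotProduct]
  | succ n ih =>
    rw [← (Fin.consEquiv fun _ => ι).sum_comp, Fintype.sum_prod_type, sum_comm]
    simp only [Fin.consEquiv_apply, Fin.prod_univ_succ, ← Fin.succ_castSucc, Fin.castSucc_zero,
      Fin.cons_succ, Fin.cons_zero, ← mul_assoc, ← sum_mul]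
    change ∑ q : Fin (n + 1) → ι, (ν ᵥ* A) (q 0) * _ = _
    rw [ih, pow_succ', ← mulVec_mulVec, dotProduct_mulVec ν A]

end Powers

section MulDiagonal

variable {ι : Type*} [Fintype ι] [DecidableEq ι] {P : Matrix ι ι ℝ} {g : ι → ℝ}

lemma pow_apply_pos_iff_of_pos_iff {A B : Matrix ι ι ℝ} (hA : ∀ i j, 0 ≤ A i j)
    (hB : ∀ i j, 0 ≤ B i j) (h : ∀ i j, 0 < A i j ↔ 0 < B i j) (k : ℕ) (i j : ι) :
    0 < (A ^ k) i j ↔ 0 < (B ^ k) i j := by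
  have hquiver : toQuiver A = toQuiver B := by
    simp only [toQuiver, h]
  rw [pow_apply_pos_iff_nonempty_path hA, pow_apply_pos_iff_nonempty_path hB, hquiver]

lemma mul_diagonal_pos_iff (hg : ∀ j, 0 < g j) (i j : ι) :
    0 < (P * diagonal g) i j ↔ 0 < P i j := by
  rw [mul_diagonal, mul_pos_iff_of_pos_right (hg j)]

lemma mul_diagonal_mulVec_one_pos (hP : ∀ i j, 0 ≤ P i j) (hrow : ∀ i, ∑ j, P i j = 1)
    (hg : ∀ j, 0 < g j) (i : ι) : 0 < ((P * diagonal g) *ᵥ 1) i := by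
  obtain ⟨j, -, hj⟩ := (sum_pos_iff_of_nonneg fun j _ => hP i j).1 (by rw [hrow i]; exact one_pos)
  simp only [mulVec, dotProduct, mul_diagonal, Pi.one_apply, mul_one]
  exact sum_pos' (fun k _ => mul_nonneg (hP i k) (hg k).le) ⟨j, mem_univ j, mul_pos hj (hg j)⟩

end MulDiagonal

end Matrix

lemma tendsto_inv_mul_log_of_le_of_le {a b : ℕ → ℝ} {L C D : ℝ}
    (ha : Tendsto (fun n : ℕ => (n : ℝ)⁻¹ * Real.log (a n)) atTop (𝓝 L)) (hpos : ∀ n, 0 < a n)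
    (hC : 0 < C) (hD : 0 < D) (hab : ∀ᶠ n in atTop, a n ≤ C * b n)
    (hba : ∀ᶠ n in atTop, b n ≤ D * a n) :
    Tendsto (fun n : ℕ => (n : ℝ)⁻¹ * Real.log (b n)) atTop (𝓝 L) := by
  have hshift : ∀ K, Tendsto (fun n : ℕ => (n : ℝ)⁻¹ * (Real.log K + Real.log (a n)))
      atTop (𝓝 L) := fun K => by
    simpa [mul_add] using (tendsto_inv_atTop_nhds_zero_nat.mul_const (Real.log K)).add ha
  have hb : ∀ᶠ n in atTop, 0 < b n := hab.mono fun n h =>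
    pos_of_mul_pos_right ((hpos n).trans_le h) hC.le
  refine tendsto_of_tendsto_of_tendsto_of_le_of_le' (hshift C⁻¹) (hshift D) ?_ ?_
  · filter_upwards [hab] with n h
    rw [← Real.log_mul (inv_ne_zero hC.ne') (hpos n).ne']
    exact mul_le_mul_of_nonneg_left
      (Real.log_le_log (by have := hpos n; positivity) (by rwa [inv_mul_le_iff₀ hC]))
      (by positivity)
  · filter_upwards [hba, hb] with n h hbn
    rw [← Real.log_mul hD.ne' (hpos n).ne']
    exact mul_le_mul_of_nonneg_left (Real.log_le_log hbn h) (by positivity)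

section SpectralRadius

variable {M : ℕ}

lemma tendsto_norm_pow_rpow_specRad (A : Matrix (Fin M) (Fin M) ℝ) :
    Tendsto (fun n : ℕ => ‖A ^ n‖ ^ (1 / n : ℝ)) atTop (𝓝 (specRad A)) := by
  set B := A.map ((↑) : ℝ → ℂ)
  have hpow : ∀ n, B ^ n = (A ^ n).map (↑) := fun n =>
    (map_pow (Complex.ofRealHom.mapMatrix : Matrix (Fin M) (Fin M) ℝ →+* _) A n).symm
  have hfin : spectralRadius ℂ B ≠ ⊤ :=
    ne_top_of_le_ne_top (by finiteness) (spectrum.spectralRadius_le_pow_nnnorm_pow_one_div ℂ B 0)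
  have := (ENNReal.tendsto_toReal hfin).comp
    (spectrum.pow_norm_pow_one_div_tendsto_nhds_spectralRadius B)
  convert this using 2 with n
  · rw [Function.comp_apply, hpow, linfty_opNorm_map_ofReal,
      ENNReal.toReal_ofReal (Real.rpow_nonneg (norm_nonneg _) _)]
  · rfl

lemma tendsto_inv_mul_log_norm_pow (A : Matrix (Fin M) (Fin M) ℝ) {c : ℝ} (hc : 0 < c)
    (h : ∀ n, c ^ n ≤ ‖A ^ n‖) :
    Tendsto (fun n : ℕ => (n : ℝ)⁻¹ * Real.log ‖A ^ n‖) atTop (𝓝 (Real.log (specRad A))) := by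
  have hroot := tendsto_norm_pow_rpow_specRad A
  have hρ : c ≤ specRad A := by
    refine ge_of_tendsto hroot ?_
    filter_upwards [eventually_ne_atTop 0] with n hn
    calc c = (c ^ n) ^ (1 / n : ℝ) := by
          rw [← Real.rpow_natCast, ← Real.rpow_mul hc.le,
            mul_one_div_cancel (by exact_mod_cast hn), Real.rpow_one]
      _ ≤ ‖A ^ n‖ ^ (1 / n : ℝ) := by gcongr; exact h n
  refine ((Real.continuousAt_log (hc.trans_le hρ).ne').tendsto.comp hroot).congr fun n => ?_
  rw [Function.comp_apply, Real.log_rpow ((pow_pos hc n).trans_le (h n)), one_div]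

theorem tendsto_inv_mul_log_dotProduct_pow_mulVec_one {A : Matrix (Fin M) (Fin M) ℝ}
    (hA : ∀ i j, 0 ≤ A i j) (hrow : ∀ i, 0 < (A *ᵥ 1) i) {ν : Fin M → ℝ} (hν : 0 ≤ ν)
    {i : Fin M} (hνi : 0 < ν i) (hirr : ∀ j, ∃ m, 0 < (A ^ m) i j) :
    Tendsto (fun n : ℕ => (n : ℝ)⁻¹ * Real.log (ν ⬝ᵥ (A ^ n *ᵥ 1))) atTop
      (𝓝 (Real.log (specRad A))) := by
  have : Nonempty (Fin M) := ⟨i⟩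
  obtain ⟨j₀, hj₀⟩ := Finite.exists_min (A *ᵥ 1)
  set c := (A *ᵥ 1) j₀
  have hc : 0 < c := hrow j₀
  have hgrowth : ∀ n, c ^ n ≤ ‖A ^ n‖ := fun n => by
    simpa using (smul_one_le_pow_mulVec_one hA hc.le (fun j => by simpa using hj₀ j) n i).trans
      (mulVec_one_apply_le_linfty_opNorm _ i)
  have hrows : ∀ n, 0 ≤ A ^ n *ᵥ 1 := fun n => mulVec_nonneg (pow_apply_nonneg hA n) zero_le_one
  obtain ⟨C, hC, hnorm⟩ := exists_norm_pow_le_mul_pow_mulVec_one hA hirr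
  refine tendsto_inv_mul_log_of_le_of_le (tendsto_inv_mul_log_norm_pow A hc hgrowth)
    (fun n => (pow_pos hc n).trans_le (hgrowth n)) (div_pos hC hνi)
    (sum_pos' (fun j _ => hν j) ⟨i, mem_univ i, hνi⟩) ?_ (Eventually.of_forall fun n => ?_)
  · filter_upwards [hnorm] with n hn
    calc ‖A ^ n‖ ≤ C * (A ^ n *ᵥ 1) i := hn
      _ = C / ν i * (ν i * (A ^ n *ᵥ 1) i) := by field_simp
      _ ≤ C / ν i * (ν ⬝ᵥ (A ^ n *ᵥ 1)) := by
          gcongr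
          exact single_le_sum (f := fun j => ν j * (A ^ n *ᵥ 1) j)
            (fun j _ => mul_nonneg (hν j) (hrows n j)) (mem_univ i)
  · calc ν ⬝ᵥ (A ^ n *ᵥ 1) ≤ ∑ j, ν j * ‖A ^ n‖ :=
          sum_le_sum fun j _ =>
            mul_le_mul_of_nonneg_left (mulVec_one_apply_le_linfty_opNorm _ j) (hν j)
      _ = (∑ j, ν j) * ‖A ^ n‖ := by rw [sum_mul]

end SpectralRadius

section MarkovChain

variable {Ω ι : Type*} [MeasurableSpace Ω] {μ : Measure Ω} {X : ℕ → Ω → ι}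

def IsMarkovChain (μ : Measure Ω) (X : ℕ → Ω → ι) (P : Matrix ι ι ℝ) : Prop :=
  ∀ (n : ℕ) (path : Fin (n + 1) → ι) (j : ι),
    μ ({ω | ∀ k : Fin (n + 1), X k ω = path k} ∩ {ω | X (n + 1) ω = j})
      = μ {ω | ∀ k : Fin (n + 1), X k ω = path k} *
          ENNReal.ofReal (P (path ⟨n, Nat.lt_succ_self n⟩) j)

lemma IsMarkovChain.measureReal_path {P : Matrix ι ι ℝ} (hP : ∀ i j, 0 ≤ P i j)
    (hX : IsMarkovChain μ X P) (n : ℕ) (p : Fin (n + 1) → ι) :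
    μ.real {ω | ∀ k : Fin (n + 1), X k ω = p k} =
      μ.real {ω | X 0 ω = p 0} * ∏ k : Fin n, P (p k.castSucc) (p k.succ) := by
  induction n with
  | zero => simp [Fin.forall_fin_one]
  | succ n ih =>
    have hsplit : {ω | ∀ k : Fin (n + 2), X k ω = p k} =
        {ω | ∀ k : Fin (n + 1), X k ω = Fin.init p k} ∩ {ω | X (n + 1) ω = p (Fin.last _)} := by
      ext ω
      simp [Fin.forall_fin_succ', Fin.init]
    rw [hsplit, measureReal_def, hX, ENNReal.toReal_mul, ENNReal.toReal_ofReal (hP _ _),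
      ← measureReal_def, ih, Fin.prod_univ_castSucc, mul_assoc]
    rfl

variable [Fintype ι] [MeasurableSpace ι] [MeasurableSingletonClass ι] [IsFiniteMeasure μ]

lemma integral_comp_path_eq_sum (hmeas : ∀ n, Measurable (X n)) (n : ℕ)
    (g : (Fin n → ι) → ℝ) :
    ∫ ω, g (fun k => X k ω) ∂μ = ∑ p, μ.real {ω | ∀ k : Fin n, X k ω = p k} * g p := by
  have hpath : Measurable fun ω (k : Fin n) => X k ω := measurable_pi_lambda _ fun k => hmeas k
  rw [← integral_map hpath.aemeasurable (by fun_prop), integral_fintype (.of_finite)]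
  refine sum_congr rfl fun p _ => ?_
  rw [smul_eq_mul, map_measureReal_apply hpath (measurableSet_singleton p)]
  congr 2
  ext ω
  simp [funext_iff]

theorem IsMarkovChain.integral_prod_eq_dotProduct [DecidableEq ι]
    (hmeas : ∀ n, Measurable (X n)) {P : Matrix ι ι ℝ} (hP : ∀ i j, 0 ≤ P i j)
    (hX : IsMarkovChain μ X P) (g : ι → ℝ) (n : ℕ) :
    ∫ ω, ∏ k ∈ range n, g (X (k + 1) ω) ∂μ =
      (fun i => μ.real {ω | X 0 ω = i}) ⬝ᵥ ((P * diagonal g) ^ n *ᵥ 1) := by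
  calc ∫ ω, ∏ k ∈ range n, g (X (k + 1) ω) ∂μ
      = ∫ ω, (fun p : Fin (n + 1) → ι => ∏ k : Fin n, g (p k.succ)) (fun k => X k ω) ∂μ := by
        congr 1
        funext ω
        exact (Fin.prod_univ_eq_prod_range (fun k => g (X (k + 1) ω)) n).symm
    _ = ∑ p : Fin (n + 1) → ι, μ.real {ω | X 0 ω = p 0} *
          ∏ k : Fin n, (P * diagonal g) (p k.castSucc) (p k.succ) := by
        rw [integral_comp_path_eq_sum hmeas (n + 1) (fun p => ∏ k : Fin n, g (p k.succ))]
        refine sum_congr rfl fun p _ => ?_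
        simp only [hX.measureReal_path hP, mul_diagonal, prod_mul_distrib, mul_assoc]
    _ = _ := sum_paths_mul_prod_eq_dotProduct _ n (fun i => μ.real {ω | X 0 ω = i})

end MarkovChain

/-- **The scaled cumulant generating function of a finite irreducible Markov
additive process.** Let `{X n}` be a Markov chain on `{0, …, M-1}` with
irreducible transition matrix `Π` (arbitrary initial distribution), taking real
values `f 0, …, f (M-1)`, and let `S n = f (X 1) + ⋯ + f (X n)`.  Then for every
`θ ∈ ℝ`,
`λ(θ) = lim_n (1/n) log E[exp (θ S n)] = log ρ(Π D_θ)`,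
where `D_θ = diag (exp (θ f i))` and `ρ` is the spectral radius. -/
theorem markov_scgf_eq_log_spectralRadius
    {Ω : Type*} [MeasurableSpace Ω] (μ : Measure Ω) [IsProbabilityMeasure μ]
    (M : ℕ) (X : ℕ → Ω → Fin M) (hmeas : ∀ n, Measurable (X n))
    (Pmat : Matrix (Fin M) (Fin M) ℝ)
    -- `Π` is a stochastic matrix
    (hnn : ∀ i j, 0 ≤ Pmat i j) (hrow : ∀ i, ∑ j, Pmat i j = 1)
    -- `Π` is irreducible
    (hirr : ∀ i j, ∃ m : ℕ, 0 < (Pmat ^ m) i j)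
    (f : Fin M → ℝ)
    -- `{X n}` is a Markov chain with transition matrix `Π`
    (hmarkov : ∀ (n : ℕ) (path : Fin (n + 1) → Fin M) (j : Fin M),
      μ ({ω | ∀ k : Fin (n + 1), X k ω = path k} ∩ {ω | X (n + 1) ω = j})
        = μ {ω | ∀ k : Fin (n + 1), X k ω = path k} *
            ENNReal.ofReal (Pmat (path ⟨n, Nat.lt_succ_self n⟩) j)) :
    ∀ θ : ℝ,
      Tendsto
        (fun n : ℕ => (n : ℝ)⁻¹ *
          Real.log (∫ ω, Real.exp (θ * ∑ i ∈ Finset.range n, f (X (i + 1) ω)) ∂μ))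
        atTop (nhds (Real.log (specRad (Pmat * Dmat f θ)))) := by
  intro θ
  unfold Dmat
  have hg : ∀ j, 0 < Real.exp (θ * f j) := fun j => Real.exp_pos _
  have hA : ∀ i j, 0 ≤ (Pmat * diagonal fun j => Real.exp (θ * f j)) i j := fun i j => by
    simpa [mul_diagonal] using mul_nonneg (hnn i j) (hg j).le
  set ν : Fin M → ℝ := fun i => μ.real {ω | X 0 ω = i}
  have hν : ∑ i, ν i = 1 := by
    have := sum_measureReal_preimage_singleton (μ := μ) univ
      fun i _ => hmeas 0 (measurableSet_singleton i)
    rwa [coe_univ, Set.preimage_univ, probReal_univ] at this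
  obtain ⟨i, -, hi⟩ : ∃ i ∈ univ, 0 < ν i := exists_lt_of_sum_lt (by simp [hν])
  have hirrA : ∀ j, ∃ m, 0 < ((Pmat * diagonal fun j => Real.exp (θ * f j)) ^ m) i j :=
    fun j => (hirr i j).imp fun m =>
      (pow_apply_pos_iff_of_pos_iff hA hnn (mul_diagonal_pos_iff hg) m i j).2
  refine (tendsto_inv_mul_log_dotProduct_pow_mulVec_one hA (mul_diagonal_mulVec_one_pos hnn hrow hg)
    (ν := ν) (fun j => measureReal_nonneg) hi hirrA).congr fun n => ?_
  rw [← IsMarkovChain.integral_prod_eq_dotProduct hmeas hnn hmarkov]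
  simp_rw [mul_sum, Real.exp_sum]
end

section
/- Let 0 < α < β < 1 and consider the two-state Markov chain {X(n)} on state space {-1, +1} with transition matrix Π = [[1-α, α], [β, 1-β]] (rows indexed by -1, +1). Then: (a) the stationary distribution is φ = (β/(α+β), α/(α+β)); and (b) Loynes' exponent equals θ* = log((1-α)/(1-β)), i.e. sup{θ : log ρ(Π D_θ) ≤ 0} = log((1-α)/(1-β)), where D_θ := diag(e^{-θ}, e^{θ}) and ρ is the spectral radius. -/
/-!
The matrix `Π D_θ` has determinant `det Π = 1 - α - β` for every `θ`, and trace
`t(θ) = (1-α) e^{-θ} + (1-β) e^{θ}`. Its eigenvalues are real, and since `t ≥ 0` and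
`det < 1`, both lie in `[-1, 1]` exactly when the characteristic polynomial is nonnegative
at `1`, i.e. when `t(θ) ≤ 2 - α - β`. Multiplying by `e^θ` this is
`((1-β) e^θ - (1-α)) (e^θ - 1) ≤ 0`, so the admissible `θ` form the interval
`[0, log ((1-α)/(1-β))]`, whose supremum is its right endpoint.
-/

open MeasureTheory Filter

open Real

lemma exists_add_eq_mul_eq_of_four_mul_le_sq {t d : ℝ} (h : 4 * d ≤ t ^ 2) :
    ∃ r s : ℝ, r + s = t ∧ r * s = d := by
  have hsq := sq_sqrt (sub_nonneg.mpr h)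
  exact ⟨(t + √(t ^ 2 - 4 * d)) / 2, (t - √(t ^ 2 - 4 * d)) / 2, by ring,
    by linear_combination (-1 / 4 : ℝ) * hsq⟩

lemma max_abs_le_one_iff {r s : ℝ} (hsum : 0 ≤ r + s) (hprod : r * s < 1) :
    max |r| |s| ≤ 1 ↔ r + s ≤ 1 + r * s := by
  rw [max_le_iff, abs_le, abs_le]
  constructor
  · rintro ⟨⟨-, hr⟩, -, hs⟩
    nlinarith [mul_nonneg (sub_nonneg.mpr hr) (sub_nonneg.mpr hs)]
  · intro h
    have hr : r ≤ 1 := by nlinarith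
    have hs : s ≤ 1 := by nlinarith
    exact ⟨⟨by linarith, hr⟩, by linarith, hs⟩

lemma Matrix.spectrum_fin_two_of_trace_of_det {K : Type*} [Field K]
    {A : Matrix (Fin 2) (Fin 2) K} {r s : K} (htr : A.trace = r + s) (hdet : A.det = r * s) :
    spectrum K A = {r, s} := by
  ext z
  have hfactor : z ^ 2 - (r + s) * z + r * s = (z - r) * (z - s) := by ring
  rw [Matrix.mem_spectrum_iff_isRoot_charpoly, Matrix.charpoly_fin_two, htr, hdet]
  simp [hfactor, sub_eq_zero]

lemma specRad_fin_two_of_trace_of_det {A : Matrix (Fin 2) (Fin 2) ℝ} {r s : ℝ}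
    (htr : A.trace = r + s) (hdet : A.det = r * s) :
    specRad A = max |r| |s| := by
  have htrℂ : (A.map (fun x => (x : ℂ))).trace = r + s := by
    rw [Matrix.trace_fin_two] at htr ⊢
    simp only [Matrix.map_apply]
    exact_mod_cast htr
  have hdetℂ : (A.map (fun x => (x : ℂ))).det = r * s := by
    rw [Matrix.det_fin_two] at hdet ⊢
    simp only [Matrix.map_apply]
    exact_mod_cast hdet
  rw [specRad, spectralRadius, Matrix.spectrum_fin_two_of_trace_of_det htrℂ hdetℂ,
    iSup_insert, iSup_singleton, ENNReal.toReal_sup ENNReal.coe_ne_top ENNReal.coe_ne_top]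
  simp

lemma specRad_fin_two_le_one_iff {A : Matrix (Fin 2) (Fin 2) ℝ}
    (hdisc : 4 * A.det ≤ A.trace ^ 2) (htr : 0 ≤ A.trace) (hdet : A.det < 1) :
    specRad A ≤ 1 ↔ A.trace ≤ 1 + A.det := by
  obtain ⟨r, s, hsum, hprod⟩ := exists_add_eq_mul_eq_of_four_mul_le_sq hdisc
  rw [specRad_fin_two_of_trace_of_det hsum.symm hprod.symm, ← hsum, ← hprod]
  exact max_abs_le_one_iff (hsum ▸ htr) (hprod ▸ hdet)

lemma trace_twoState_mul_diagonal (α β θ : ℝ) :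
    (Matrix.of ![![1 - α, α], ![β, 1 - β]] *
      Matrix.diagonal ![exp (-θ), exp θ]).trace = (1 - α) * exp (-θ) + (1 - β) * exp θ := by
  rw [Matrix.trace_fin_two, Matrix.mul_diagonal, Matrix.mul_diagonal]
  simp

lemma det_twoState_mul_diagonal (α β θ : ℝ) :
    (Matrix.of ![![1 - α, α], ![β, 1 - β]] *
      Matrix.diagonal ![exp (-θ), exp θ]).det = 1 - α - β := by
  rw [Matrix.det_mul, Matrix.det_diagonal, Fin.prod_univ_two, Matrix.det_fin_two]
  simp only [Matrix.of_apply, Matrix.cons_val_zero, Matrix.cons_val_one,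
    ← exp_add, neg_add_cancel, exp_zero]
  ring

lemma mul_exp_neg_add_mul_exp_le_iff {a b θ : ℝ} (hb : 0 < b) (hba : b ≤ a) :
    a * exp (-θ) + b * exp θ ≤ a + b ↔ θ ∈ Set.Icc 0 (log (a / b)) := by
  have hu := exp_pos θ
  have hfactor :
      a * exp (-θ) + b * exp θ - (a + b) = (b * exp θ - a) * (exp θ - 1) / exp θ := by
    rw [exp_neg]
    field_simp
    ring
  rw [← sub_nonpos, hfactor, div_le_iff₀ hu, zero_mul, Set.mem_Icc, ← one_le_exp_iff (x := θ),
    le_log_iff_exp_le (div_pos (hb.trans_le hba) hb), le_div_iff₀' hb]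
  constructor
  · intro h
    rcases mul_nonpos_iff.mp h with ⟨hbu, hu1⟩ | ⟨hbu, hu1⟩
    · have hu_one : exp θ = 1 := le_antisymm (by linarith) (by nlinarith)
      rw [hu_one, mul_one]
      exact ⟨le_rfl, hba⟩
    · exact ⟨by linarith, by linarith⟩
  · rintro ⟨h1, h2⟩
    exact mul_nonpos_of_nonpos_of_nonneg (by linarith) (by linarith)

lemma vecMul_twoState_stationary {α β : ℝ} (hαβ : α + β ≠ 0) :
    Matrix.vecMul ![β / (α + β), α / (α + β)] (Matrix.of ![![1 - α, α], ![β, 1 - β]])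
      = ![β / (α + β), α / (α + β)] := by
  ext j
  fin_cases j <;> simp [Matrix.vecMul, dotProduct, Fin.sum_univ_two] <;> field_simp <;> ring

lemma setOf_log_specRad_twoState_nonpos {α β : ℝ} (hα : 0 ≤ α) (hαβ : α ≤ β) (hβ0 : 0 < β)
    (hβ : β < 1) :
    {θ : ℝ | log (specRad (Matrix.of ![![1 - α, α], ![β, 1 - β]] *
        Matrix.diagonal ![exp (-θ), exp θ])) ≤ 0}
      = Set.Icc 0 (log ((1 - α) / (1 - β))) := by
  ext θ
  have htr := trace_twoState_mul_diagonal α β θ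
  have hdet := det_twoState_mul_diagonal α β θ
  have hab : ((1 - α) * exp (-θ)) * ((1 - β) * exp θ) = (1 - α) * (1 - β) := by
    rw [mul_mul_mul_comm, ← exp_add, neg_add_cancel, exp_zero, mul_one]
  have hdisc : 4 * (1 - α - β) ≤ ((1 - α) * exp (-θ) + (1 - β) * exp θ) ^ 2 := by
    nlinarith [sq_nonneg ((1 - α) * exp (-θ) - (1 - β) * exp θ), hab, mul_nonneg hα hβ0.le]
  have htr_nonneg : 0 ≤ (1 - α) * exp (-θ) + (1 - β) * exp θ :=
    add_nonneg (mul_nonneg (by linarith) (exp_pos _).le) (mul_nonneg (by linarith) (exp_pos _).le)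
  rw [Set.mem_ofPred_eq, log_nonpos_iff (show 0 ≤ specRad _ from ENNReal.toReal_nonneg),
    specRad_fin_two_le_one_iff (htr ▸ hdet ▸ hdisc) (htr ▸ htr_nonneg) (by linarith), htr, hdet,
    show 1 + (1 - α - β) = (1 - α) + (1 - β) by ring,
    mul_exp_neg_add_mul_exp_le_iff (by linarith) (by linarith)]

/-- **The two-state example.** For `0 < α < β < 1`, the two-state Markov chain
with transition matrix `Π = [[1-α, α], [β, 1-β]]` (rows/columns indexed by the
states `-1, +1`, taking the values `f(-1) = -1`, `f(+1) = +1`) has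
(a) stationary distribution `φ = (β/(α+β), α/(α+β))`, i.e. `φ Π = φ`; and
(b) Loynes' exponent `θ* = sup {θ : log ρ(Π D_θ) ≤ 0} = log ((1-α)/(1-β))`,
where `D_θ = diag (e^{-θ}, e^{θ})`. -/
theorem two_state_example
    (α β : ℝ) (hα : 0 < α) (hαβ : α < β) (hβ : β < 1) :
    (Matrix.vecMul ![β / (α + β), α / (α + β)]
        (Matrix.of ![![1 - α, α], ![β, 1 - β]])
      = ![β / (α + β), α / (α + β)]) ∧
    sSup {θ : ℝ |
        Real.log (specRad
          (Matrix.of ![![1 - α, α], ![β, 1 - β]] *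
            Matrix.diagonal ![Real.exp (-θ), Real.exp θ])) ≤ 0}
      = Real.log ((1 - α) / (1 - β)) := by
  have hβ0 : 0 < β := hα.trans hαβ
  have hratio : 1 ≤ (1 - α) / (1 - β) := (one_le_div (by linarith)).mpr (by linarith)
  refine ⟨vecMul_twoState_stationary (by linarith), ?_⟩
  rw [setOf_log_specRad_twoState_nonpos hα.le hαβ.le hβ0 hβ]
  exact csSup_Icc (log_nonneg hratio)
end
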